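/- Let α ∈ (0,1) and let F and G be cumulative distribution functions with ∫_{−∞}^0 F(y) dy < ∞ and ∫_{−∞}^0 G(y) dy < ∞, with m(F) finite and d(F,G) finite. Then |CVaR_α(G) − CVaR_α(F)| ≤ (1/α) · (1 + max{1, 3·m(F)} / min{α, 1−α}) · ( d(F,G) + d(F,G)² ); that is, CVaR admits the strong-stability modulus of continuity with exponent q = 2 and explicit constant. -/

import Mathlib

open MeasureTheory

/-- A cumulative distribution function: nondecreasing, right-continuous,
tending to `0` at `−∞` and to `1` at `+∞`. -/
def IsCDF (F : ℝ → ℝ) : Prop :=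
  Monotone F ∧ (∀ y : ℝ, ContinuousWithinAt F (Set.Ici y) y) ∧
    Filter.Tendsto F Filter.atBot (nhds 0) ∧ Filter.Tendsto F Filter.atTop (nhds 1)

/-- Value-at-risk at level `α`: `VaR_α(F) = inf{ y : F y ≥ α }`. -/
noncomputable def VaR (α : ℝ) (F : ℝ → ℝ) : ℝ :=
  sInf {y : ℝ | α ≤ F y}

/-- Conditional value-at-risk at level `α`:
`CVaR_α(F) = VaR_α(F) − (1/α) ∫_{−∞}^{VaR_α(F)} F(y) dy`. -/
noncomputable def CVaR (α : ℝ) (F : ℝ → ℝ) : ℝ :=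
  VaR α F - (1 / α) * ∫ y in Set.Iio (VaR α F), F y

/-- `m(F) = max{1, ∫_{−∞}^0 F, ∫_0^∞ (1 − F)}`, a tail-size functional. -/
noncomputable def mTail (F : ℝ → ℝ) : ℝ :=
  max 1 (max (∫ y in Set.Iic (0 : ℝ), F y) (∫ y in Set.Ioi (0 : ℝ), (1 - F y)))

/-- `d(F,G) = max{ sup_y |F−G|, |∫_{−∞}^0 (F−G)|, |∫_0^∞ (F−G)| }`, the norm
distance between two CDFs. -/
noncomputable def dDist (F G : ℝ → ℝ) : ℝ :=
  max (⨆ y : ℝ, |F y - G y|)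
    (max |∫ y in Set.Iic (0 : ℝ), (F y - G y)| |∫ y in Set.Ioi (0 : ℝ), (F y - G y)|)


/-!
By the Rockafellar–Uryasev formula, `α · CVaR_α(F) = max_v (α v - ∫_{-∞}^v F)`, the maximum
being attained at `v = VaR_α(F)`. Evaluating the problem for `F` at the maximiser for `G`, and
vice versa, gives `|α (CVaR_α G - CVaR_α F)| ≤ |∫_{-∞}^v (F - G)|` for some
`v ∈ {VaR_α F, VaR_α G}`, and this integral is at most `d (1 + |v|)` with `d = d(F,G)`.
Markov's inequality on the two tails bounds `|VaR_α|` of either distribution by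
`(m(F) + d) / min(α, 1 - α)`; this is where the term `d²` comes from.
-/

open Set Filter MeasureTheory intervalIntegral

lemma Monotone.integrableOn_Iic {F : ℝ → ℝ} (hF : Monotone F) {a : ℝ}
    (ha : IntegrableOn F (Iic a)) (b : ℝ) : IntegrableOn F (Iic b) :=
  (ha.union ((hF.monotoneOn _).integrableOn_isCompact isCompact_Icc)).mono_set
    fun t (ht : t ≤ b) => (le_total t a).imp id fun hat => ⟨hat, ht⟩

lemma Monotone.integrableOn_Iio {F : ℝ → ℝ} (hF : Monotone F) {a : ℝ}
    (ha : IntegrableOn F (Iic a)) (b : ℝ) : IntegrableOn F (Iio b) :=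
  (hF.integrableOn_Iic ha b).mono_set Iio_subset_Iic_self

lemma abs_integral_Iio_le {H : ℝ → ℝ} {ε v : ℝ} (hH : ∀ t, |H t| ≤ ε)
    (h0 : IntegrableOn H (Iic 0)) (hv : IntegrableOn H (Iic v)) :
    |∫ t in Iio v, H t| ≤ |∫ t in Iic 0, H t| + ε * |v| := by
  have hsplit : ∫ t in Iio v, H t = (∫ t in Iic 0, H t) + ∫ t in (0 : ℝ)..v, H t := by
    rw [← integral_Iic_eq_integral_Iio, ← integral_Iic_sub_Iic h0 hv, add_sub_cancel]
  have hinterval : ‖∫ t in (0 : ℝ)..v, H t‖ ≤ ε * |v - 0| :=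
    norm_integral_le_of_norm_le_const fun t _ => (Real.norm_eq_abs _).trans_le (hH t)
  rw [Real.norm_eq_abs, sub_zero] at hinterval
  rw [hsplit]
  exact (abs_add_le _ _).trans (by gcongr)

lemma mul_CVaR {α : ℝ} (hα : α ≠ 0) (F : ℝ → ℝ) :
    α * CVaR α F = α * VaR α F - ∫ t in Iio (VaR α F), F t := by
  rw [CVaR]
  field_simp

namespace IsCDF

variable {F G : ℝ → ℝ} {α : ℝ}

lemma nonneg (hF : IsCDF F) (y : ℝ) : 0 ≤ F y :=
  le_of_tendsto hF.2.2.1 ((eventually_le_atBot y).mono fun _ hz => hF.1 hz)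

lemma le_one (hF : IsCDF F) (y : ℝ) : F y ≤ 1 :=
  ge_of_tendsto hF.2.2.2 ((eventually_ge_atTop y).mono fun _ hz => hF.1 hz)

lemma nonempty_setOf_le (hF : IsCDF F) (hα : α < 1) : {y | α ≤ F y}.Nonempty :=
  (hF.2.2.2.eventually (eventually_ge_nhds hα)).exists

lemma bddBelow_setOf_le (hF : IsCDF F) (hα : 0 < α) : BddBelow {y | α ≤ F y} := by
  obtain ⟨z, hz⟩ := eventually_atBot.1 (hF.2.2.1.eventually (eventually_lt_nhds hα))
  exact ⟨z, fun y (hy : α ≤ F y) => le_of_not_gt fun hyz => (hz y hyz.le).not_ge hy⟩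

lemma VaR_le (hF : IsCDF F) (hα : 0 < α) {y : ℝ} (hy : α ≤ F y) : VaR α F ≤ y :=
  csInf_le (hF.bddBelow_setOf_le hα) hy

lemma apply_lt_of_lt_VaR (hF : IsCDF F) (hα : 0 < α) {y : ℝ} (hy : y < VaR α F) : F y < α :=
  lt_of_not_ge fun h => (hF.VaR_le hα h).not_gt hy

lemma le_apply_VaR (hF : IsCDF F) (hα : α < 1) : α ≤ F (VaR α F) := by
  have hright : ∀ y, VaR α F < y → α ≤ F y := fun y hy => by
    obtain ⟨s, hs, hsy⟩ := exists_lt_of_csInf_lt (hF.nonempty_setOf_le hα) hy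
    exact hs.trans (hF.1 hsy.le)
  exact ge_of_tendsto ((hF.2.1 _).mono Ioi_subset_Ici_self)
    (eventually_mem_nhdsWithin.mono hright)

lemma mul_sub_integral_le_mul_CVaR (hF : IsCDF F) (hα : α ∈ Ioo 0 1)
    (hI : IntegrableOn F (Iic 0)) (v : ℝ) :
    α * v - ∫ t in Iio v, F t ≤ α * CVaR α F := by
  set w := VaR α F
  have hdiff : (∫ t in Iio w, F t) - ∫ t in Iio v, F t = ∫ t in v..w, F t :=
    integral_Iio_sub_Iio' (hF.1.integrableOn_Iio hI w) (hF.1.integrableOn_Iio hI v)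
  suffices h : ∫ t in v..w, F t ≤ ∫ _ in v..w, α by
    rw [intervalIntegral.integral_const, smul_eq_mul] at h
    rw [mul_CVaR hα.1.ne']
    linarith
  rcases le_total v w with hvw | hwv
  · exact integral_mono_on_of_le_Ioo hvw hF.1.intervalIntegrable intervalIntegrable_const
      fun t ht => (hF.apply_lt_of_lt_VaR hα.1 ht.2).le
  · rw [integral_symm w, integral_symm w]
    exact neg_le_neg (integral_mono_on hwv intervalIntegrable_const hF.1.intervalIntegrable
      fun t ht => (hF.le_apply_VaR hα.2).trans (hF.1 ht.1))

lemma mul_CVaR_sub_mul_CVaR_le (hF : IsCDF F) (hG : IsCDF G) (hα : α ∈ Ioo 0 1)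
    (hIF : IntegrableOn F (Iic 0)) (hIG : IntegrableOn G (Iic 0)) :
    α * CVaR α G - α * CVaR α F ≤ ∫ t in Iio (VaR α G), (F t - G t) := by
  rw [integral_sub (hF.1.integrableOn_Iio hIF _) (hG.1.integrableOn_Iio hIG _),
    mul_CVaR hα.1.ne' G]
  linarith [hF.mul_sub_integral_le_mul_CVaR hα hIF (VaR α G)]

lemma abs_mul_CVaR_sub_le (hF : IsCDF F) (hG : IsCDF G) (hα : α ∈ Ioo 0 1)
    (hIF : IntegrableOn F (Iic 0)) (hIG : IntegrableOn G (Iic 0)) {ε c : ℝ}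
    (hsup : ∀ y, |F y - G y| ≤ ε) (h0 : |∫ t in Iic 0, (F t - G t)| ≤ ε)
    (hcF : |VaR α F| ≤ c) (hcG : |VaR α G| ≤ c) :
    |α * CVaR α G - α * CVaR α F| ≤ ε * (1 + c) := by
  have hε : 0 ≤ ε := (abs_nonneg _).trans (hsup 0)
  have hdiff : ∀ v, |v| ≤ c → |∫ t in Iio v, (F t - G t)| ≤ ε * (1 + c) := fun v hv =>
    calc |∫ t in Iio v, (F t - G t)| ≤ |∫ t in Iic 0, (F t - G t)| + ε * |v| :=
          abs_integral_Iio_le hsup (hIF.sub hIG)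
            ((hF.1.integrableOn_Iic hIF v).sub (hG.1.integrableOn_Iic hIG v))
      _ ≤ ε * (1 + c) := by linarith [mul_le_mul_of_nonneg_left hv hε]
  have hupper := hF.mul_CVaR_sub_mul_CVaR_le hG hα hIF hIG
  have hlower := hG.mul_CVaR_sub_mul_CVaR_le hF hα hIG hIF
  rw [show (fun t => G t - F t) = fun t => -(F t - G t) by ext; ring,
    MeasureTheory.integral_neg] at hlower
  rw [abs_le]
  constructor <;> linarith [abs_le.1 (hdiff _ hcF), abs_le.1 (hdiff _ hcG)]

lemma mul_neg_le_integral_Iic (hF : IsCDF F) (hI : IntegrableOn F (Iic 0)) {y : ℝ}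
    (hy : y ≤ 0) : F y * -y ≤ ∫ t in Iic 0, F t := by
  have hsplit := integral_Iic_sub_Iic (hF.1.integrableOn_Iic hI y) hI
  have hleft : 0 ≤ ∫ t in Iic y, F t :=
    setIntegral_nonneg measurableSet_Iic fun t _ => hF.nonneg t
  have hmid : ∫ _ in y..0, F y ≤ ∫ t in y..0, F t :=
    integral_mono_on hy intervalIntegrable_const hF.1.intervalIntegrable fun t ht => hF.1 ht.1
  rw [intervalIntegral.integral_const, smul_eq_mul] at hmid
  linarith

lemma mul_le_integral_Ioi (hF : IsCDF F) (hI : IntegrableOn (fun t => 1 - F t) (Ioi 0))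
    {y : ℝ} (hy : 0 ≤ y) : (1 - F y) * y ≤ ∫ t in Ioi 0, (1 - F t) := by
  have hsplit := integral_interval_add_Ioi hI (hI.mono_set (Ioi_subset_Ioi hy))
  have hright : 0 ≤ ∫ t in Ioi y, (1 - F t) :=
    setIntegral_nonneg measurableSet_Ioi fun t _ => sub_nonneg.2 (hF.le_one t)
  have hmid : ∫ _ in (0 : ℝ)..y, (1 - F y) ≤ ∫ t in (0 : ℝ)..y, (1 - F t) :=
    integral_mono_on hy intervalIntegrable_const
      (intervalIntegrable_const.sub hF.1.intervalIntegrable)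
      fun t ht => sub_le_sub_left (hF.1 ht.2) 1
  rw [intervalIntegral.integral_const, smul_eq_mul] at hmid
  linarith

lemma neg_div_le_VaR (hF : IsCDF F) (hα : α ∈ Ioo 0 1) (hI : IntegrableOn F (Iic 0)) {c : ℝ}
    (hc : ∫ t in Iic 0, F t ≤ c) : -(c / α) ≤ VaR α F := by
  refine le_csInf (hF.nonempty_setOf_le hα.2) fun y (hy : α ≤ F y) => ?_
  rcases le_total 0 y with hy0 | hy0
  · have hc0 : 0 ≤ c :=
      (setIntegral_nonneg measurableSet_Iic fun t _ => hF.nonneg t).trans hc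
    exact (neg_nonpos.2 (div_nonneg hc0 hα.1.le)).trans hy0
  · have hmarkov : α * -y ≤ c :=
      (mul_le_mul_of_nonneg_right hy (neg_nonneg.2 hy0)).trans
        ((hF.mul_neg_le_integral_Iic hI hy0).trans hc)
    rw [neg_le, le_div_iff₀ hα.1]
    linarith

lemma VaR_le_div (hF : IsCDF F) (hα : α ∈ Ioo 0 1)
    (hI : IntegrableOn (fun t => 1 - F t) (Ioi 0)) {c : ℝ} (hc0 : 0 < c)
    (hc : ∫ t in Ioi 0, (1 - F t) ≤ c) : VaR α F ≤ c / (1 - α) := by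
  have h1α : 0 < 1 - α := sub_pos.2 hα.2
  set y := c / (1 - α)
  have hy : 0 < y := div_pos hc0 h1α
  have hmarkov : (1 - F y) * y ≤ (1 - α) * y := by
    rw [mul_div_cancel₀ c h1α.ne']
    exact (hF.mul_le_integral_Ioi hI hy.le).trans hc
  exact hF.VaR_le hα.1 (by linarith [le_of_mul_le_mul_right hmarkov hy])

lemma abs_VaR_le (hF : IsCDF F) (hα : α ∈ Ioo 0 1) (hI : IntegrableOn F (Iic 0))
    (hI' : IntegrableOn (fun t => 1 - F t) (Ioi 0)) {c : ℝ} (hc0 : 0 < c)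
    (hc : ∫ t in Iic 0, F t ≤ c) (hc' : ∫ t in Ioi 0, (1 - F t) ≤ c) :
    |VaR α F| ≤ c / min α (1 - α) := by
  have hμ : 0 < min α (1 - α) := lt_min hα.1 (sub_pos.2 hα.2)
  refine abs_le.2 ⟨(neg_le_neg ?_).trans (hF.neg_div_le_VaR hα hI hc),
    (hF.VaR_le_div hα hI' hc0 hc').trans ?_⟩
  exacts [div_le_div_of_nonneg_left hc0.le hμ (min_le_left _ _),
    div_le_div_of_nonneg_left hc0.le hμ (min_le_right _ _)]

lemma abs_sub_le_dDist (hF : IsCDF F) (hG : IsCDF G) (y : ℝ) : |F y - G y| ≤ dDist F G := by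
  have hbdd : BddAbove (range fun y => |F y - G y|) := ⟨1, by
    rintro _ ⟨z, rfl⟩
    exact abs_sub_le_iff.2 ⟨by linarith [hF.le_one z, hG.nonneg z],
      by linarith [hG.le_one z, hF.nonneg z]⟩⟩
  exact (le_ciSup hbdd y).trans (le_max_left _ _)

end IsCDF

lemma one_le_mTail (F : ℝ → ℝ) : 1 ≤ mTail F :=
  le_max_left _ _

lemma integral_Iic_le_mTail (F : ℝ → ℝ) : ∫ t in Iic 0, F t ≤ mTail F :=
  le_max_of_le_right (le_max_left _ _)

lemma integral_Ioi_one_sub_le_mTail (F : ℝ → ℝ) : ∫ t in Ioi 0, (1 - F t) ≤ mTail F :=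
  le_max_of_le_right (le_max_right _ _)

lemma abs_integral_Iic_sub_le_dDist (F G : ℝ → ℝ) :
    |∫ t in Iic 0, (F t - G t)| ≤ dDist F G :=
  le_max_of_le_right (le_max_left _ _)

lemma abs_integral_Ioi_sub_le_dDist (F G : ℝ → ℝ) :
    |∫ t in Ioi 0, (F t - G t)| ≤ dDist F G :=
  le_max_of_le_right (le_max_right _ _)

lemma integral_Iic_le_mTail_add_dDist {F G : ℝ → ℝ} (hIF : IntegrableOn F (Iic 0))
    (hIG : IntegrableOn G (Iic 0)) : ∫ t in Iic 0, G t ≤ mTail F + dDist F G := by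
  have hFG := abs_integral_Iic_sub_le_dDist F G
  rw [integral_sub hIF hIG] at hFG
  linarith [abs_le.1 hFG, integral_Iic_le_mTail F]

lemma integral_Ioi_one_sub_le_mTail_add_dDist {F G : ℝ → ℝ}
    (hIF : IntegrableOn (fun t => 1 - F t) (Ioi 0))
    (hIG : IntegrableOn (fun t => 1 - G t) (Ioi 0)) :
    ∫ t in Ioi 0, (1 - G t) ≤ mTail F + dDist F G := by
  have hFG := abs_integral_Ioi_sub_le_dDist F G
  simp only [← sub_sub_sub_cancel_left (G _) (F _) 1] at hFG
  rw [integral_sub hIG hIF] at hFG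
  linarith [abs_le.1 hFG, integral_Ioi_one_sub_le_mTail F]

lemma mul_one_add_add_div_le {m ε μ : ℝ} (hm : 1 ≤ m) (hε : 0 ≤ ε) (hμ : 0 < μ) :
    ε * (1 + (m + ε) / μ) ≤ (1 + max 1 (3 * m) / μ) * (ε + ε ^ 2) := by
  have hnum : ε * (m + ε) ≤ 3 * m * (ε + ε ^ 2) := by nlinarith [mul_nonneg hε hε]
  rw [max_eq_right (by linarith)]
  calc ε * (1 + (m + ε) / μ) = ε + ε * (m + ε) / μ := by ring
    _ ≤ ε + 3 * m * (ε + ε ^ 2) / μ := by gcongr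
    _ ≤ (ε + ε ^ 2) + 3 * m * (ε + ε ^ 2) / μ := by nlinarith
    _ = (1 + 3 * m / μ) * (ε + ε ^ 2) := by ring

/-- Strong stability of CVaR: the modulus-of-continuity bound
`|CVaR_α(G) − CVaR_α(F)| ≤ (1/α)(1 + max{1, 3m(F)}/min{α,1−α})(d(F,G) + d(F,G)²)`. -/
theorem CVaR_strong_stability (α : ℝ) (hα : α ∈ Set.Ioo (0 : ℝ) 1)
    (F G : ℝ → ℝ) (hF : IsCDF F) (hG : IsCDF G)
    (hIntF : IntegrableOn F (Set.Iic (0 : ℝ)))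
    (hIntF' : IntegrableOn (fun y => 1 - F y) (Set.Ioi (0 : ℝ)))
    (hIntG : IntegrableOn G (Set.Iic (0 : ℝ)))
    (hIntG' : IntegrableOn (fun y => 1 - G y) (Set.Ioi (0 : ℝ))) :
    |CVaR α G - CVaR α F| ≤
      (1 / α) * (1 + max 1 (3 * mTail F) / min α (1 - α)) *
        (dDist F G + dDist F G ^ 2) := by
  set ε := dDist F G
  set m := mTail F
  have hε : 0 ≤ ε := (abs_nonneg _).trans (hF.abs_sub_le_dDist hG 0)
  have hm : 1 ≤ m := one_le_mTail F
  have hμ : 0 < min α (1 - α) := lt_min hα.1 (sub_pos.2 hα.2)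
  have hVaRF : |VaR α F| ≤ (m + ε) / min α (1 - α) :=
    hF.abs_VaR_le hα hIntF hIntF' (by linarith)
      ((integral_Iic_le_mTail F).trans (le_add_of_nonneg_right hε))
      ((integral_Ioi_one_sub_le_mTail F).trans (le_add_of_nonneg_right hε))
  have hVaRG : |VaR α G| ≤ (m + ε) / min α (1 - α) :=
    hG.abs_VaR_le hα hIntG hIntG' (by linarith) (integral_Iic_le_mTail_add_dDist hIntF hIntG)
      (integral_Ioi_one_sub_le_mTail_add_dDist hIntF' hIntG')
  have hCVaR := hF.abs_mul_CVaR_sub_le hG hα hIntF hIntG (hF.abs_sub_le_dDist hG)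
    (abs_integral_Iic_sub_le_dDist F G) hVaRF hVaRG
  rw [← mul_sub, abs_mul, abs_of_pos hα.1, ← le_div_iff₀' hα.1,
    ← one_div_mul_eq_div] at hCVaR
  calc |CVaR α G - CVaR α F| ≤ (1 / α) * (ε * (1 + (m + ε) / min α (1 - α))) := hCVaR
    _ ≤ (1 / α) * ((1 + max 1 (3 * m) / min α (1 - α)) * (ε + ε ^ 2)) :=
        mul_le_mul_of_nonneg_left (mul_one_add_add_div_le hm hε hμ) (one_div_pos.2 hα.1).le
    _ = _ := by ring
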